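/- arXiv:1402.5473 — 5 statements merged into one kernel-verified Lean document; each statement's English description precedes it below -/
import Mathlib

section
/- Let σ(t) = 1/(1 + exp(−t)), let N > 0, γ > 0, δ > 0, and ε ∈ (0,1). Let x : ℝ → ℝ be differentiable with x(0) = x₀ ∈ [0,1] and x′(t) = exp(−Nδ)·(σ(γN) − x(t)) for all t. If T ≥ exp(Nδ)·log(1/ε), then |x(T) − σ(γN)| ≤ ε. -/
/-!
The gap to the equilibrium σ(γN) decays exactly like exp(−exp(−Nδ)·t), since
(x t − σ(γN))·exp(exp(−Nδ)·t) has zero derivative. Both x₀ and σ(γN) lie in [0, 1], so the initial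
gap is at most 1, and at time T ≥ exp(Nδ)·log(1/ε) the decay factor is at most ε.
-/

noncomputable def logistic (t : ℝ) : ℝ := 1 / (1 + Real.exp (-t))

open Real

theorem logistic_pos (t : ℝ) : 0 < logistic t := by
  unfold logistic
  positivity

theorem logistic_lt_one (t : ℝ) : logistic t < 1 := by
  have h := exp_pos (-t)
  rw [logistic, div_lt_one (by positivity)]
  linarith

theorem sub_eq_mul_exp_neg_of_hasDerivAt {x : ℝ → ℝ} {k c : ℝ}
    (hx : ∀ t, HasDerivAt x (k * (c - x t)) t) (t : ℝ) :
    x t - c = (x 0 - c) * exp (-(k * t)) := by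
  have hg : ∀ s, HasDerivAt (fun s => (x s - c) * exp (k * s)) 0 s := fun s => by
    have he : HasDerivAt (fun s => exp (k * s)) (exp (k * s) * k) s :=
      ((hasDerivAt_id s).const_mul k).exp.congr_deriv (by simp)
    exact ((hx s).sub_const c).mul he |>.congr_deriv (by ring)
  have hconst : (x t - c) * exp (k * t) = x 0 - c := by
    simpa using is_const_of_deriv_eq_zero (fun s => (hg s).differentiableAt)
      (fun s => (hg s).deriv) t 0
  rw [← hconst, mul_assoc, ← exp_add, add_neg_cancel, exp_zero, mul_one]

theorem exp_neg_le_of_log_inv_le {ε s : ℝ} (hε : 0 < ε) (hs : log (1 / ε) ≤ s) :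
    exp (-s) ≤ ε := by
  calc exp (-s) ≤ exp (-log (1 / ε)) := exp_le_exp.mpr (neg_le_neg hs)
    _ = ε := by rw [exp_neg, exp_log (by positivity), one_div, inv_inv]

theorem stmt_3_general (N γ δ ε x₀ T : ℝ)
    (hε : ε ∈ Set.Ioo (0:ℝ) 1)
    (x : ℝ → ℝ) (hdiff : Differentiable ℝ x)
    (hx0 : x 0 = x₀) (hx₀ : x₀ ∈ Set.Icc (0:ℝ) 1)
    (hode : ∀ t : ℝ, deriv x t = Real.exp (-(N * δ)) * (logistic (γ * N) - x t))
    (hT : T ≥ Real.exp (N * δ) * Real.log (1 / ε)) :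
    |x T - logistic (γ * N)| ≤ ε := by
  have hgap : |x₀ - logistic (γ * N)| ≤ 1 :=
    abs_sub_le_of_nonneg_of_le hx₀.1 hx₀.2 (logistic_pos _).le (logistic_lt_one _).le
  have hdecay : exp (-(exp (-(N * δ)) * T)) ≤ ε := by
    refine exp_neg_le_of_log_inv_le hε.1 ?_
    calc log (1 / ε) = exp (-(N * δ)) * (exp (N * δ) * log (1 / ε)) := by
          rw [← mul_assoc, ← exp_add, neg_add_cancel, exp_zero, one_mul]
      _ ≤ exp (-(N * δ)) * T := by gcongr
  rw [sub_eq_mul_exp_neg_of_hasDerivAt (fun t => hode t ▸ (hdiff t).hasDerivAt) T, hx0,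
    abs_mul, abs_of_pos (exp_pos _)]
  calc |x₀ - logistic (γ * N)| * exp (-(exp (-(N * δ)) * T)) ≤ 1 * ε := by gcongr
    _ = ε := one_mul ε

/-- Theorem 2(a), sufficiency: for the cold-inference dynamics
x′ = exp(−Nδ)·(σ(γN) − x) started at x₀ ∈ [0,1], time T ≥ exp(Nδ)·log(1/ε)
suffices to bring the TVD |x(T) − σ(γN)| below ε. -/
theorem stmt_3 (N γ δ ε x₀ T : ℝ)
    (hN : 0 < N) (hγ : 0 < γ) (hδ : 0 < δ) (hε : ε ∈ Set.Ioo (0:ℝ) 1)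
    (x : ℝ → ℝ) (hdiff : Differentiable ℝ x)
    (hx0 : x 0 = x₀) (hx₀ : x₀ ∈ Set.Icc (0:ℝ) 1)
    (hode : ∀ t : ℝ, deriv x t = Real.exp (-(N * δ)) * (logistic (γ * N) - x t))
    (hT : T ≥ Real.exp (N * δ) * Real.log (1 / ε)) :
    |x T - logistic (γ * N)| ≤ ε :=
  stmt_3_general N γ δ ε x₀ T hε x hdiff hx0 hx₀ hode hT
end

section
/- Let σ(t) = 1/(1 + exp(−t)), let N > 0, γ > 0, δ > 0, T ≥ 0, and let ε satisfy 0 < ε < σ(γN). Let x : ℝ → ℝ be differentiable with x(0) = 0 and x′(t) = exp(−Nδ)·(σ(γN) − x(t)) for all t. If |x(T) − σ(γN)| ≤ ε, then T ≥ exp(Nδ)·log(σ(γN)/ε). -/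
/-!
Along the linear relaxation x′ = k (c − x) the quantity (x − c)·e^{kt} is constant, so from
x(0) = 0 the distance to the target is exactly σ(γN)·e^{−kt} with k = e^{−Nδ}. Reaching distance
ε therefore needs k·T ≥ log(σ(γN)/ε).
-/

open Real

theorem eq_add_mul_exp_of_hasDerivAt_relaxation {x : ℝ → ℝ} {k c : ℝ}
    (hx : ∀ t, HasDerivAt x (k * (c - x t)) t) (t : ℝ) :
    x t = c + (x 0 - c) * exp (-(k * t)) := by
  set f : ℝ → ℝ := fun t => (x t - c) * exp (k * t)
  have hf : ∀ t, HasDerivAt f 0 t := fun t => by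
    have hexp : HasDerivAt (fun t => exp (k * t)) (exp (k * t) * k) t := by
      simpa using ((hasDerivAt_id t).const_mul k).exp
    exact (((hx t).sub_const c).mul hexp).congr_deriv (by ring)
  have hconst : f t = f 0 :=
    is_const_of_deriv_eq_zero (fun t => (hf t).differentiableAt) (fun t => (hf t).deriv) t 0
  have hexp : exp (k * t) * exp (-(k * t)) = 1 := by rw [← exp_add]; simp
  calc x t = c + f t * exp (-(k * t)) := by simp only [f]; linear_combination (c - x t) * hexp
    _ = c + (x 0 - c) * exp (-(k * t)) := by simp [hconst, f]

theorem log_div_le_of_mul_exp_neg_le {c ε τ : ℝ} (hc : 0 < c) (h : c * exp (-τ) ≤ ε) :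
    log (c / ε) ≤ τ := by
  have hε : 0 < ε := (mul_pos hc (exp_pos _)).trans_le h
  rw [log_le_iff_le_exp (div_pos hc hε), div_le_iff₀ hε]
  calc c = exp τ * (c * exp (-τ)) := by rw [mul_left_comm, ← exp_add]; simp
    _ ≤ exp τ * ε := by gcongr

theorem stmt_4_general (N γ δ ε T : ℝ)
    (x : ℝ → ℝ) (hdiff : Differentiable ℝ x)
    (hx0 : x 0 = 0)
    (hode : ∀ t : ℝ, deriv x t = Real.exp (-(N * δ)) * (logistic (γ * N) - x t))
    (hclose : |x T - logistic (γ * N)| ≤ ε) :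
    T ≥ Real.exp (N * δ) * Real.log (logistic (γ * N) / ε) := by
  set k := exp (-(N * δ))
  set s := logistic (γ * N)
  have hxT : x T = s + (0 - s) * exp (-(k * T)) := by
    rw [← hx0]
    exact eq_add_mul_exp_of_hasDerivAt_relaxation (fun t => hode t ▸ (hdiff t).hasDerivAt) T
  have hdist : s * exp (-(k * T)) ≤ ε := by
    rwa [hxT, add_sub_cancel_left, abs_mul, abs_of_pos (exp_pos _), zero_sub, abs_neg,
      abs_of_pos (logistic_pos _)] at hclose
  have hlog : log (s / ε) ≤ k * T := log_div_le_of_mul_exp_neg_le (logistic_pos _) hdist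
  calc exp (N * δ) * log (s / ε) ≤ exp (N * δ) * (k * T) := by gcongr
    _ = T := by rw [← mul_assoc, ← exp_add]; simp

/-- Theorem 2(a), lower bound: for the cold-inference dynamics
x′ = exp(−Nδ)·(σ(γN) − x) started at the worst-case state x(0) = 0, achieving
TVD |x(T) − σ(γN)| ≤ ε < σ(γN) requires T ≥ exp(Nδ)·log(σ(γN)/ε). -/
theorem stmt_4 (N γ δ ε T : ℝ)
    (hN : 0 < N) (hγ : 0 < γ) (hδ : 0 < δ) (hT0 : 0 ≤ T)
    (hε : 0 < ε) (hε' : ε < logistic (γ * N))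
    (x : ℝ → ℝ) (hdiff : Differentiable ℝ x)
    (hx0 : x 0 = 0)
    (hode : ∀ t : ℝ, deriv x t = Real.exp (-(N * δ)) * (logistic (γ * N) - x t))
    (hclose : |x T - logistic (γ * N)| ≤ ε) :
    T ≥ Real.exp (N * δ) * Real.log (logistic (γ * N) / ε) :=
  stmt_4_general N γ δ ε T x hdiff hx0 hode hclose
end

section
/- Let σ(t) = 1/(1 + exp(−t)), let N > 0, γ > 0, δ > 0, T > 0, and let x : [0,T] → ℝ be differentiable with x(0) = 0 and x′(t) = exp(−Nδt/T)·(σ(γNt/T) − x(t)) for all t ∈ [0,T]. Define β(s) = (−1/(Nδ))·log(exp(−Nδ) − (Nδ/T)·log s) for s ∈ (0,1] and τ₀ = exp(−(T/(Nδ))·(1 − exp(−Nδ))). Then x(T) = ∫_{τ₀}^{1} σ(Nγ·β(τ)) dτ. -/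
open Set Real intervalIntegral

@[fun_prop]
lemma continuous_logistic : Continuous logistic := by
  have : logistic = sigmoid := funext fun t => by rw [logistic, one_div, sigmoid_def]
  exact this ▸ continuous_sigmoid

section IntegratingFactor

variable {x φ r f : ℝ → ℝ} {t : ℝ}

theorem HasDerivAt.mul_integratingFactor (hx : HasDerivAt x (r t * (f t - x t)) t)
    (hφ : HasDerivAt φ (φ t * r t) t) :
    HasDerivAt (fun s => x s * φ s) (f t * (φ t * r t)) t :=
  (hx.mul hφ).congr_deriv (by ring)

theorem sub_eq_integral_comp_of_integratingFactor {g : ℝ → ℝ} {a b : ℝ} (hab : a ≤ b)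
    (hx : ∀ t ∈ Icc a b, HasDerivAt x (r t * (f t - x t)) t)
    (hφ : ∀ t ∈ Icc a b, HasDerivAt φ (φ t * r t) t)
    (hφr : ∀ t ∈ Icc a b, 0 ≤ φ t * r t)
    (hf : ContinuousOn f (Icc a b)) (hr : ContinuousOn r (Icc a b))
    (hfg : EqOn f (g ∘ φ) (Icc a b)) :
    x b * φ b - x a * φ a = ∫ τ in φ a..φ b, g τ := by
  have hφc : ContinuousOn φ (Icc a b) := fun t ht => (hφ t ht).continuousAt.continuousWithinAt
  have hint : IntervalIntegrable (fun t => f t * (φ t * r t)) MeasureTheory.volume a b :=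
    (hf.mul (hφc.mul hr)).intervalIntegrable_of_Icc hab
  have hIoo : Ioo (min a b) (max a b) ⊆ Icc a b := by
    rw [min_eq_left hab, max_eq_right hab]
    exact Ioo_subset_Icc_self
  calc x b * φ b - x a * φ a = ∫ t in a..b, f t * (φ t * r t) :=
        (integral_eq_sub_of_hasDerivAt (fun t ht => by
          rw [uIcc_of_le hab] at ht
          exact (hx t ht).mul_integratingFactor (hφ t ht)) hint).symm
    _ = ∫ t in a..b, (g ∘ φ) t * (φ t * r t) :=
        integral_congr fun t ht => by rw [hfg (by rwa [uIcc_of_le hab] at ht)]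
    _ = ∫ τ in φ a..φ b, g τ :=
        integral_comp_mul_deriv_of_deriv_nonneg (by rwa [uIcc_of_le hab])
          (fun t ht => hφ t (hIoo ht)) (fun t ht => hφr t (hIoo ht))

end IntegratingFactor

section NaturalCoordinates

variable {a T t : ℝ}

/-- The integrating factor `exp (-∫_t^T exp (-a u / T) du)`, normalized to be `1` at `t = T`. -/
noncomputable def naturalTime (a T t : ℝ) : ℝ :=
  exp (T / a * (exp (-a) - exp (-(a * t / T))))

noncomputable def naturalSchedule (a T s : ℝ) : ℝ :=
  -1 / a * log (exp (-a) - a / T * log s)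

theorem hasDerivAt_naturalTime (ha : a ≠ 0) (hT : T ≠ 0) :
    HasDerivAt (naturalTime a T) (naturalTime a T t * exp (-(a * t / T))) t := by
  have hlin : HasDerivAt (fun s => -(a * s / T)) (-(a / T)) t := by
    simpa using (((hasDerivAt_id t).const_mul a).div_const T).fun_neg
  have hexponent := (hlin.exp.const_sub (exp (-a))).const_mul (T / a)
  refine hexponent.exp.congr_deriv ?_
  rw [naturalTime]
  field_simp

theorem naturalTime_zero : naturalTime a T 0 = exp (-(T / a) * (1 - exp (-a))) := by
  simp only [naturalTime, mul_zero, zero_div, neg_zero, exp_zero]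
  ring_nf

theorem naturalTime_self (hT : T ≠ 0) : naturalTime a T T = 1 := by
  simp [naturalTime, mul_div_assoc, div_self hT]

theorem naturalTime_pos : 0 < naturalTime a T t := exp_pos _

theorem naturalTime_le_one (ha : 0 < a) (hT : 0 < T) (ht : t ≤ T) : naturalTime a T t ≤ 1 := by
  refine exp_le_one_iff.2 (mul_nonpos_of_nonneg_of_nonpos (by positivity) (sub_nonpos.2 ?_))
  refine exp_le_exp.2 (neg_le_neg ?_)
  rw [div_le_iff₀ hT]
  exact mul_le_mul_of_nonneg_left ht ha.le

theorem naturalSchedule_naturalTime (ha : a ≠ 0) (hT : T ≠ 0) :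
    naturalSchedule a T (naturalTime a T t) = t / T := by
  have hinner : exp (-a) - a / T * log (naturalTime a T t) = exp (-(a * t / T)) := by
    rw [naturalTime, log_exp]
    field_simp
    ring
  rw [naturalSchedule, hinner, log_exp]
  field_simp

end NaturalCoordinates

theorem stmt_8_general (N γ δ T : ℝ) (hN : 0 < N) (hδ : 0 < δ) (hT : 0 < T)
    (x : ℝ → ℝ)
    (hx0 : x 0 = 0)
    (hode : ∀ t ∈ Set.Icc (0:ℝ) T, HasDerivAt x
      (Real.exp (-(N * δ * t / T)) * (logistic (γ * N * t / T) - x t)) t)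
    (β : ℝ → ℝ)
    (hβ : ∀ s ∈ Set.Ioc (0:ℝ) 1, β s =
      (-1 / (N * δ)) * Real.log (Real.exp (-(N * δ)) - (N * δ / T) * Real.log s))
    (τ₀ : ℝ)
    (hτ₀ : τ₀ = Real.exp (-(T / (N * δ)) * (1 - Real.exp (-(N * δ))))) :
    x T = ∫ τ in τ₀..1, logistic (N * γ * β τ) := by
  have ha : 0 < N * δ := mul_pos hN hδ
  have hβφ : ∀ t ∈ Icc 0 T, β (naturalTime (N * δ) T t) = t / T := fun t ht => by
    rw [hβ _ ⟨naturalTime_pos, naturalTime_le_one ha hT ht.2⟩]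
    exact naturalSchedule_naturalTime ha.ne' hT.ne'
  have key := sub_eq_integral_comp_of_integratingFactor (f := fun t => logistic (γ * N * t / T))
    (g := fun τ => logistic (N * γ * β τ)) hT.le hode
    (fun t _ => hasDerivAt_naturalTime ha.ne' hT.ne')
    (fun t _ => (mul_pos naturalTime_pos (exp_pos _)).le)
    (by fun_prop) (by fun_prop)
    (fun t ht => by simp only [Function.comp_apply, hβφ t ht]; ring_nf)
  rwa [naturalTime_self hT.ne', naturalTime_zero, ← hτ₀, hx0, zero_mul, mul_one, sub_zero] at key

/-- for the annealed dynamics x′(t) = exp(−Nδt/T)·(σ(γNt/T) − x(t))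
with x(0) = 0, the final state is the integral x(T) = ∫_{τ₀}^{1} σ(Nγ·β(τ)) dτ
over the transformed annealing schedule β in natural coordinates. -/
theorem stmt_8 (N γ δ T : ℝ) (hN : 0 < N) (hγ : 0 < γ) (hδ : 0 < δ) (hT : 0 < T)
    (x : ℝ → ℝ)
    (hx0 : x 0 = 0)
    (hode : ∀ t ∈ Set.Icc (0:ℝ) T, HasDerivAt x
      (Real.exp (-(N * δ * t / T)) * (logistic (γ * N * t / T) - x t)) t)
    (β : ℝ → ℝ)
    (hβ : ∀ s ∈ Set.Ioc (0:ℝ) 1, β s =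
      (-1 / (N * δ)) * Real.log (Real.exp (-(N * δ)) - (N * δ / T) * Real.log s))
    (τ₀ : ℝ)
    (hτ₀ : τ₀ = Real.exp (-(T / (N * δ)) * (1 - Real.exp (-(N * δ))))) :
    x T = ∫ τ in τ₀..1, logistic (N * γ * β τ) :=
  stmt_8_general N γ δ T hN hδ hT x hx0 hode β hβ τ₀ hτ₀
end

section
/- Let N > 0, γ > 0, δ > 0, T > 0 and ε ∈ (0,1) be real numbers with (ε/2)^{δ/γ} > exp(−Nδ) and T > Nδ·log(2/ε) / ((ε/2)^{δ/γ} − exp(−Nδ)). Define β(s) = (−1/(Nδ))·log(exp(−Nδ) − (Nδ/T)·log s) for s ∈ (0,1]. Then for every τ ∈ [ε/2, 1], exp(−Nγ·β(τ)) < ε/2; consequently ∫_{ε/2}^{1} exp(−Nγ·β(τ)) dτ < ε/2. -/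
/-- if T > Nδ·log(2/ε)/((ε/2)^{δ/γ} − exp(−Nδ)) (with
(ε/2)^{δ/γ} > exp(−Nδ)), then the transformed-schedule integrand
exp(−Nγ·β(τ)) is < ε/2 on [ε/2, 1], and hence its integral over [ε/2, 1]
is < ε/2. -/
theorem stmt_13 (N γ δ T ε : ℝ) (hN : 0 < N) (hγ : 0 < γ) (hδ : 0 < δ) (hT0 : 0 < T)
    (hε : ε ∈ Set.Ioo (0:ℝ) 1)
    (hgap : (ε / 2) ^ (δ / γ) > Real.exp (-(N * δ)))
    (hT : T > N * δ * Real.log (2 / ε) / ((ε / 2) ^ (δ / γ) - Real.exp (-(N * δ))))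
    (β : ℝ → ℝ)
    (hβ : ∀ s ∈ Set.Ioc (0:ℝ) 1, β s =
      (-1 / (N * δ)) * Real.log (Real.exp (-(N * δ)) - (N * δ / T) * Real.log s)) :
    (∀ τ ∈ Set.Icc (ε / 2) 1, Real.exp (-(N * γ * β τ)) < ε / 2) ∧
    ∫ τ in (ε / 2)..1, Real.exp (-(N * γ * β τ)) < ε / 2 := by
  obtain ⟨hε0, hε1⟩ := hε
  have hε2 : 0 < ε / 2 := by linarith
  have hε2le1 : ε / 2 ≤ 1 := by linarith
  have hNδ : (0:ℝ) < N * δ := mul_pos hN hδ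
  have hEpos : (0:ℝ) < Real.exp (-(N * δ)) := Real.exp_pos _
  have hGpos : (0:ℝ) < (ε / 2) ^ (δ / γ) - Real.exp (-(N * δ)) := by linarith
  have h1 : N * δ * Real.log (2 / ε) < T * ((ε / 2) ^ (δ / γ) - Real.exp (-(N * δ))) :=
    (div_lt_iff₀ hGpos).mp hT
  have hkey : N * δ / T * Real.log (2 / ε) < (ε / 2) ^ (δ / γ) - Real.exp (-(N * δ)) := by
    rw [div_mul_eq_mul_div, div_lt_iff₀ hT0]
    nlinarith [h1]
  -- positivity and bound of the inner argument
  have hApos : ∀ τ : ℝ, ε / 2 ≤ τ → τ ≤ 1 →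
      0 < Real.exp (-(N * δ)) - N * δ / T * Real.log τ := by
    intro τ hτ1 hτ2
    have hτpos : 0 < τ := lt_of_lt_of_le hε2 hτ1
    have hlogτ : Real.log τ ≤ 0 := Real.log_nonpos (le_of_lt hτpos) hτ2
    have hc : 0 ≤ N * δ / T := le_of_lt (div_pos hNδ hT0)
    nlinarith [mul_nonneg hc (neg_nonneg.mpr hlogτ)]
  have hAlt : ∀ τ : ℝ, ε / 2 ≤ τ → τ ≤ 1 →
      Real.exp (-(N * δ)) - N * δ / T * Real.log τ < (ε / 2) ^ (δ / γ) := by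
    intro τ hτ1 hτ2
    have hτpos : 0 < τ := lt_of_lt_of_le hε2 hτ1
    have hlog_ge : Real.log (ε / 2) ≤ Real.log τ := Real.log_le_log hε2 hτ1
    have hlogε : Real.log (ε / 2) = -Real.log (2 / ε) := by
      rw [Real.log_div (ne_of_gt hε0) (by norm_num), Real.log_div (by norm_num) (ne_of_gt hε0)]
      ring
    have hc : 0 ≤ N * δ / T := le_of_lt (div_pos hNδ hT0)
    have h2 : N * δ / T * (-Real.log τ) ≤ N * δ / T * Real.log (2 / ε) := by
      apply mul_le_mul_of_nonneg_left _ hc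
      linarith [hlog_ge, hlogε.le, hlogε.ge]
    nlinarith [h2, hkey]
  -- pointwise bound
  have hpt : ∀ τ ∈ Set.Icc (ε / 2) 1, Real.exp (-(N * γ * β τ)) < ε / 2 := by
    intro τ hτ
    obtain ⟨hτ1, hτ2⟩ := hτ
    have hτpos : 0 < τ := lt_of_lt_of_le hε2 hτ1
    have hβτ := hβ τ ⟨hτpos, hτ2⟩
    set A := Real.exp (-(N * δ)) - N * δ / T * Real.log τ with hA
    have hA0 : 0 < A := hApos τ hτ1 hτ2
    have hA1 : A < (ε / 2) ^ (δ / γ) := hAlt τ hτ1 hτ2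
    have hexp_eq : -(N * γ * β τ) = γ / δ * Real.log A := by
      rw [hβτ]
      field_simp
    rw [hexp_eq]
    have hrpow : Real.exp (γ / δ * Real.log A) = A ^ (γ / δ) := by
      rw [Real.rpow_def_of_pos hA0, mul_comm]
    rw [hrpow]
    have hγδ : 0 < γ / δ := div_pos hγ hδ
    calc A ^ (γ / δ) < ((ε / 2) ^ (δ / γ)) ^ (γ / δ) :=
          Real.rpow_lt_rpow (le_of_lt hA0) hA1 hγδ
      _ = (ε / 2) ^ (δ / γ * (γ / δ)) := (Real.rpow_mul (le_of_lt hε2) _ _).symm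
      _ = ε / 2 := by
          rw [show δ / γ * (γ / δ) = 1 by field_simp, Real.rpow_one]
  refine ⟨hpt, ?_⟩
  -- explicit continuous version of the integrand
  set g : ℝ → ℝ := fun τ => Real.exp (-(N * γ *
      ((-1 / (N * δ)) * Real.log (Real.exp (-(N * δ)) - N * δ / T * Real.log τ)))) with hg
  have huIcc : Set.uIcc (ε / 2) 1 = Set.Icc (ε / 2) 1 := Set.uIcc_of_le hε2le1
  have heq : Set.EqOn (fun τ => Real.exp (-(N * γ * β τ))) g (Set.uIcc (ε / 2) 1) := by
    intro τ hτ
    rw [huIcc] at hτ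
    obtain ⟨hτ1, hτ2⟩ := hτ
    have hτpos : 0 < τ := lt_of_lt_of_le hε2 hτ1
    simp only [hg]
    rw [hβ τ ⟨hτpos, hτ2⟩]
  rw [intervalIntegral.integral_congr heq]
  have hgcont : ContinuousOn g (Set.uIcc (ε / 2) 1) := by
    rw [huIcc]
    intro x hx
    obtain ⟨hx1, hx2⟩ := hx
    have hxpos : 0 < x := lt_of_lt_of_le hε2 hx1
    have hAx : 0 < Real.exp (-(N * δ)) - N * δ / T * Real.log x := hApos x hx1 hx2
    have c1 : ContinuousAt (fun τ => Real.exp (-(N * δ)) - N * δ / T * Real.log τ) x :=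
      continuousAt_const.sub (continuousAt_const.mul (Real.continuousAt_log (ne_of_gt hxpos)))
    have c2 : ContinuousAt (fun τ =>
        Real.log (Real.exp (-(N * δ)) - N * δ / T * Real.log τ)) x :=
      c1.log (ne_of_gt hAx)
    exact (Real.continuous_exp.continuousAt.comp
      ((continuousAt_const.mul (continuousAt_const.mul c2)).neg)).continuousWithinAt
  have hint : IntervalIntegrable g MeasureTheory.volume (ε / 2) 1 :=
    hgcont.intervalIntegrable
  have hgle : ∀ x ∈ Set.Icc (ε / 2) 1, g x ≤ ε / 2 := by
    intro x hx
    have h2 : Real.exp (-(N * γ * β x)) = g x := heq (by rwa [huIcc])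
    rw [← h2]
    exact (hpt x hx).le
  have hmono : ∫ τ in (ε / 2)..1, g τ ≤ ∫ _τ in (ε / 2)..1, (ε / 2 : ℝ) :=
    intervalIntegral.integral_mono_on hε2le1 hint intervalIntegrable_const hgle
  have hconst : ∫ _τ in (ε / 2)..1, (ε / 2 : ℝ) = (1 - ε / 2) * ε / 2 := by
    simp [intervalIntegral.integral_const, smul_eq_mul]
  rw [hconst] at hmono
  nlinarith [hmono]
end

section
/- For all real γ > 0 and δ > 0 there exists a constant C > 0 such that for all ε ∈ (0,1), all N ≥ C·(1 + log(1/ε))/γ, and all T ≥ C·N·δ·(1 + log(1/ε))·(1/ε)^{δ/γ}, the following holds: if x : [0,T] → ℝ is differentiable with x(0) = 0 and x′(t) = exp(−Nδt/T)·(σ(γNt/T) − x(t)) for all t ∈ [0,T], where σ(t) = 1/(1 + exp(−t)), then σ(Nγ) − x(T) ≤ ε. -/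
open Real Set

lemma logistic_nonneg (t : ℝ) : 0 ≤ logistic t := by
  unfold logistic; positivity

lemma logistic_le_one (t : ℝ) : logistic t ≤ 1 := by
  unfold logistic
  rw [div_le_one (by positivity)]
  linarith [exp_pos (-t)]

lemma one_sub_exp_neg_le_logistic (t : ℝ) : 1 - exp (-t) ≤ logistic t := by
  unfold logistic
  rw [le_div_iff₀ (by positivity)]
  nlinarith [exp_pos (-t)]

lemma exp_neg_le_half_of_log_two_div_le {ε s : ℝ} (hε : 0 < ε) (hs : log (2 / ε) ≤ s) :
    exp (-s) ≤ ε / 2 :=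
  calc exp (-s) ≤ exp (-log (2 / ε)) := exp_le_exp.2 (neg_le_neg hs)
    _ = ε / 2 := by rw [exp_neg, exp_log (by positivity), inv_div]

lemma one_sub_half_le_logistic {ε s : ℝ} (hε : 0 < ε) (hs : log (2 / ε) ≤ s) :
    1 - ε / 2 ≤ logistic s := by
  linarith [one_sub_exp_neg_le_logistic s, exp_neg_le_half_of_log_two_div_le hε hs]

theorem sub_le_mul_exp_of_relaxation {x r f A : ℝ → ℝ} {a b c : ℝ} (hab : a ≤ b)
    (hA : ∀ t ∈ Icc a b, HasDerivAt A (r t) t) (hr : ∀ t ∈ Icc a b, 0 ≤ r t)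
    (hf : ∀ t ∈ Icc a b, c ≤ f t)
    (hx : ∀ t ∈ Icc a b, HasDerivAt x (r t * (f t - x t)) t) :
    c - x b ≤ (c - x a) * exp (A a - A b) := by
  have hderiv : ∀ t ∈ Icc a b, HasDerivAt (fun t => (c - x t) * exp (A t))
      (r t * (c - f t) * exp (A t)) t := fun t ht =>
    (((hx t ht).const_sub c).mul (hA t ht).exp).congr_deriv (by ring)
  have hanti : AntitoneOn (fun t => (c - x t) * exp (A t)) (Icc a b) := by
    refine antitoneOn_of_hasDerivWithinAt_nonpos (convex_Icc a b)
      (fun t ht => (hderiv t ht).continuousAt.continuousWithinAt)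
      (fun t ht => (hderiv t (interior_subset ht)).hasDerivWithinAt) fun t ht => ?_
    have ht := interior_subset ht
    exact mul_nonpos_of_nonpos_of_nonneg
      (mul_nonpos_of_nonneg_of_nonpos (hr t ht) (by linarith [hf t ht])) (exp_pos _).le
  have := hanti (left_mem_Icc.2 hab) (right_mem_Icc.2 hab) hab
  rw [exp_sub, ← mul_div_assoc, le_div_iff₀ (exp_pos _)]
  exact this

lemma hasDerivAt_neg_div_mul_exp_neg_mul_div {k T : ℝ} (hk : k ≠ 0) (hT : T ≠ 0) (t : ℝ) :
    HasDerivAt (fun s => -(T / k) * exp (-(k * s / T))) (exp (-(k * t / T))) t := by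
  have hlin : HasDerivAt (fun s : ℝ => -(k * s / T)) (-(k / T)) t := by
    have := (((hasDerivAt_id t).const_mul k).div_const T).neg
    rwa [mul_one] at this
  refine (hlin.exp.const_mul (-(T / k))).congr_deriv ?_
  field_simp

theorem sub_le_exp_of_annealed {γ N δ T c t₀ : ℝ} {x : ℝ → ℝ} (hNδ : 0 < N * δ) (hT : 0 < T)
    (ht₀ : t₀ ∈ Icc 0 T) (hc : c ≤ 1) (hcσ : ∀ t ∈ Icc t₀ T, c ≤ logistic (γ * N * t / T))
    (hx0 : x 0 = 0)
    (hx : ∀ t ∈ Icc 0 T,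
      HasDerivAt x (exp (-(N * δ * t / T)) * (logistic (γ * N * t / T) - x t)) t) :
    c - x T ≤ exp (-(T / (N * δ) * (exp (-(N * δ * t₀ / T)) - exp (-(N * δ))))) := by
  set A : ℝ → ℝ := fun s => -(T / (N * δ)) * exp (-(N * δ * s / T))
  have hA : ∀ t, HasDerivAt A (exp (-(N * δ * t / T))) t :=
    hasDerivAt_neg_div_mul_exp_neg_mul_div hNδ.ne' hT.ne'
  have hx_nonneg : 0 ≤ x t₀ := by
    have := sub_le_mul_exp_of_relaxation (c := 0) ht₀.1 (fun t _ => hA t)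
      (fun t _ => (exp_pos _).le) (fun t _ => logistic_nonneg _)
      (fun t ht => hx t ⟨ht.1, ht.2.trans ht₀.2⟩)
    rw [hx0] at this
    linarith
  have hA_sub : A t₀ - A T = -(T / (N * δ) * (exp (-(N * δ * t₀ / T)) - exp (-(N * δ)))) := by
    simp only [A]
    rw [mul_div_cancel_right₀ _ hT.ne']
    ring
  calc c - x T ≤ (c - x t₀) * exp (A t₀ - A T) :=
        sub_le_mul_exp_of_relaxation ht₀.2 (fun t _ => hA t) (fun t _ => (exp_pos _).le) hcσ
          (fun t ht => hx t ⟨ht₀.1.trans ht.1, ht.2⟩)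
    _ ≤ exp (A t₀ - A T) := mul_le_of_le_one_left (exp_pos _).le (by linarith)
    _ = _ := by rw [hA_sub]

/-- `1 + γ/δ` makes `Nδ ≥ (δ/γ) log(2/ε) + log 2`, so `exp(-Nδ) ≤ (ε/2)^{δ/γ}/2`; `2·2^{δ/γ}`
absorbs that factor `1/2` and the gap between `(ε/2)^{δ/γ}` and `ε^{δ/γ}`. -/
noncomputable def annealingConstant (γ δ : ℝ) : ℝ := 2 * 2 ^ (δ / γ) + γ / δ + 1

section annealingConstant

variable {γ δ : ℝ}

lemma annealingConstant_pos (hγ : 0 < γ) (hδ : 0 < δ) : 0 < annealingConstant γ δ := by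
  unfold annealingConstant; positivity

lemma one_add_div_le_annealingConstant : 1 + γ / δ ≤ annealingConstant γ δ := by
  unfold annealingConstant
  linarith [rpow_pos_of_pos two_pos (δ / γ)]

lemma one_le_annealingConstant (hγ : 0 < γ) (hδ : 0 < δ) : 1 ≤ annealingConstant γ δ := by
  linarith [one_add_div_le_annealingConstant (γ := γ) (δ := δ), div_pos hγ hδ]

lemma two_mul_two_rpow_le_annealingConstant (hγ : 0 < γ) (hδ : 0 < δ) :
    2 * 2 ^ (δ / γ) ≤ annealingConstant γ δ := by
  unfold annealingConstant
  linarith [div_pos hγ hδ]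

end annealingConstant

lemma log_two_div_le_one_add_log_one_div {ε : ℝ} (hε : 0 < ε) :
    log (2 / ε) ≤ 1 + log (1 / ε) := by
  rw [div_eq_mul_one_div 2 ε, log_mul two_ne_zero (by positivity)]
  linarith [log_two_lt_d9]

lemma one_le_one_add_log_one_div {ε : ℝ} (hε : ε ∈ Ioo 0 1) : 1 ≤ 1 + log (1 / ε) := by
  linarith [log_nonneg (one_le_one_div hε.1 hε.2.le)]

lemma log_two_div_pos {ε : ℝ} (hε : ε ∈ Ioo 0 1) : 0 < log (2 / ε) :=
  log_pos (by rw [lt_div_iff₀ hε.1]; linarith [hε.2])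

section growth

variable {γ δ ε N T : ℝ}

lemma log_two_div_le_mul (hγ : 0 < γ) (hδ : 0 < δ) (hε : ε ∈ Ioo 0 1)
    (hN : N ≥ annealingConstant γ δ * (1 + log (1 / ε)) / γ) : log (2 / ε) ≤ γ * N := by
  have hL : 0 ≤ 1 + log (1 / ε) := by linarith [one_le_one_add_log_one_div hε]
  rw [ge_iff_le, div_le_iff₀ hγ] at hN
  calc log (2 / ε) ≤ 1 + log (1 / ε) := log_two_div_le_one_add_log_one_div hε.1
    _ ≤ annealingConstant γ δ * (1 + log (1 / ε)) :=
        le_mul_of_one_le_left hL (one_le_annealingConstant hγ hδ)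
    _ ≤ γ * N := by linarith

lemma exp_neg_mul_le_half (hγ : 0 < γ) (hδ : 0 < δ) (hε : ε ∈ Ioo 0 1)
    (hN : N ≥ annealingConstant γ δ * (1 + log (1 / ε)) / γ) :
    exp (-(N * δ)) ≤ exp (-(δ / γ * log (2 / ε))) / 2 := by
  set L := 1 + log (1 / ε)
  have hL : 1 ≤ L := one_le_one_add_log_one_div hε
  have hNδ : (1 + γ / δ) * (L * (δ / γ)) ≤ N * δ :=
    calc (1 + γ / δ) * (L * (δ / γ)) ≤ annealingConstant γ δ * (L * (δ / γ)) :=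
          mul_le_mul_of_nonneg_right one_add_div_le_annealingConstant (by positivity)
      _ = annealingConstant γ δ * L / γ * δ := by ring
      _ ≤ N * δ := mul_le_mul_of_nonneg_right hN hδ.le
  have hexpand : (1 + γ / δ) * (L * (δ / γ)) = δ / γ * L + L := by field_simp
  have hℓ : δ / γ * log (2 / ε) ≤ δ / γ * L :=
    mul_le_mul_of_nonneg_left (log_two_div_le_one_add_log_one_div hε.1) (by positivity)
  calc exp (-(N * δ)) ≤ exp (-(δ / γ * log (2 / ε)) - log 2) :=
        exp_le_exp.2 (by linarith [log_two_lt_d9])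
    _ = exp (-(δ / γ * log (2 / ε))) / 2 := by rw [exp_sub, exp_log two_pos]

lemma exp_neg_mul_log_two_div (hε : 0 < ε) (p : ℝ) :
    exp (-(p * log (2 / ε))) = (1 / ε) ^ (-p) * 2 ^ (-p) := by
  rw [← mul_rpow (by positivity) (by positivity), rpow_def_of_pos (by positivity),
    one_div_mul_eq_div]
  ring_nf

lemma two_mul_log_two_div_le (hγ : 0 < γ) (hδ : 0 < δ) (hε : ε ∈ Ioo 0 1) (hN : 0 ≤ N)
    (hT : T ≥ annealingConstant γ δ * N * δ * (1 + log (1 / ε)) * (1 / ε) ^ (δ / γ)) :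
    2 * (N * δ) * log (2 / ε) ≤ T * exp (-(δ / γ * log (2 / ε))) := by
  set p := δ / γ
  set C := annealingConstant γ δ
  set L := 1 + log (1 / ε)
  have hL : 0 ≤ L := by linarith [one_le_one_add_log_one_div hε]
  have hC : 2 ≤ C * 2 ^ (-p) := by
    have := mul_le_mul_of_nonneg_right (two_mul_two_rpow_le_annealingConstant hγ hδ)
      (rpow_pos_of_pos two_pos (-p)).le
    rwa [mul_assoc, ← rpow_add two_pos, add_neg_cancel, rpow_zero, mul_one] at this
  have hcancel : (1 / ε) ^ p * (1 / ε) ^ (-p) = 1 := by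
    have hε0 := hε.1
    rw [rpow_neg (by positivity), mul_inv_cancel₀ (by positivity)]
  calc 2 * (N * δ) * log (2 / ε) ≤ 2 * (N * δ) * L :=
        mul_le_mul_of_nonneg_left (log_two_div_le_one_add_log_one_div hε.1) (by positivity)
    _ ≤ C * 2 ^ (-p) * (N * δ * L) := by
        rw [mul_assoc]; exact mul_le_mul_of_nonneg_right hC (by positivity)
    _ = C * N * δ * L * (1 / ε) ^ p * exp (-(p * log (2 / ε))) := by
        rw [exp_neg_mul_log_two_div hε.1]
        linear_combination (-(C * 2 ^ (-p) * N * δ * L)) * hcancel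
    _ ≤ T * exp (-(p * log (2 / ε))) := mul_le_mul_of_nonneg_right hT (exp_pos _).le

lemma pos_of_ge_annealingTime (hγ : 0 < γ) (hδ : 0 < δ) (hε : ε ∈ Ioo 0 1) (hN : 0 < N)
    (hT : T ≥ annealingConstant γ δ * N * δ * (1 + log (1 / ε)) * (1 / ε) ^ (δ / γ)) : 0 < T := by
  have hε0 := hε.1
  have hL : 0 < 1 + log (1 / ε) := by linarith [one_le_one_add_log_one_div hε]
  have hC := annealingConstant_pos hγ hδ
  exact lt_of_lt_of_le (by positivity) hT

lemma log_two_div_le_annealing_growth (hγ : 0 < γ) (hδ : 0 < δ) (hε : ε ∈ Ioo 0 1)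
    (hN : N ≥ annealingConstant γ δ * (1 + log (1 / ε)) / γ)
    (hT : T ≥ annealingConstant γ δ * N * δ * (1 + log (1 / ε)) * (1 / ε) ^ (δ / γ)) :
    log (2 / ε) ≤ T / (N * δ) * (exp (-(δ / γ * log (2 / ε))) - exp (-(N * δ))) := by
  have hN0 : 0 < N :=
    pos_of_mul_pos_right ((log_two_div_pos hε).trans_le (log_two_div_le_mul hγ hδ hε hN)) hγ.le
  have hT0 := pos_of_ge_annealingTime hγ hδ hε hN0 hT
  have hNδ : 0 < N * δ := mul_pos hN0 hδ
  calc log (2 / ε) ≤ T / (N * δ) * (exp (-(δ / γ * log (2 / ε))) / 2) := by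
        rw [div_mul_eq_mul_div, le_div_iff₀ hNδ]
        linarith [two_mul_log_two_div_le hγ hδ hε hN0.le hT]
    _ ≤ T / (N * δ) * (exp (-(δ / γ * log (2 / ε))) - exp (-(N * δ))) := by
        gcongr
        linarith [exp_neg_mul_le_half hγ hδ hε hN]

end growth

/-- Theorem 2(b): there is a constant C = C(γ, δ) > 0 such that
for every ε ∈ (0,1), every data size N ≥ C·(1 + log(1/ε))/γ and every schedule
length T ≥ C·N·δ·(1 + log(1/ε))·(1/ε)^{δ/γ}, the annealed dynamics
x′(t) = exp(−Nδt/T)·(σ(γNt/T) − x(t)) with worst-case initial state x(0) = 0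
reaches total variational distance σ(Nγ) − x(T) ≤ ε. -/
theorem stmt_14 (γ δ : ℝ) (hγ : 0 < γ) (hδ : 0 < δ) :
    ∃ C : ℝ, 0 < C ∧
      ∀ ε ∈ Set.Ioo (0:ℝ) 1,
      ∀ N : ℝ, N ≥ C * (1 + Real.log (1 / ε)) / γ →
      ∀ T : ℝ, T ≥ C * N * δ * (1 + Real.log (1 / ε)) * (1 / ε) ^ (δ / γ) →
      ∀ x : ℝ → ℝ, x 0 = 0 →
        (∀ t ∈ Set.Icc (0:ℝ) T, HasDerivAt x
          (Real.exp (-(N * δ * t / T)) * (logistic (γ * N * t / T) - x t)) t) →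
        logistic (N * γ) - x T ≤ ε := by
  refine ⟨annealingConstant γ δ, annealingConstant_pos hγ hδ, ?_⟩
  rintro ε hε N hN T hT x hx0 hx
  have hγN := log_two_div_le_mul hγ hδ hε hN
  have hℓ := log_two_div_pos hε
  have hN0 : 0 < N := pos_of_mul_pos_right (hℓ.trans_le hγN) hγ.le
  have hT0 := pos_of_ge_annealingTime hγ hδ hε hN0 hT
  set t₀ := T * log (2 / ε) / (γ * N) with ht₀_def
  have ht₀ : t₀ ∈ Icc 0 T := ⟨by positivity, by
    rw [div_le_iff₀ (by positivity)]; exact mul_le_mul_of_nonneg_left hγN hT0.le⟩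
  have hσ : ∀ t ∈ Icc t₀ T, 1 - ε / 2 ≤ logistic (γ * N * t / T) := fun t ht =>
    one_sub_half_le_logistic hε.1 <| calc
      log (2 / ε) = γ * N * t₀ / T := by rw [ht₀_def]; field_simp
      _ ≤ γ * N * t / T := by gcongr; exact ht.1
  have hgap := sub_le_exp_of_annealed (mul_pos hN0 hδ) hT0 ht₀ (by linarith [hε.1]) hσ hx0 hx
  rw [show N * δ * t₀ / T = δ / γ * log (2 / ε) by rw [ht₀_def]; field_simp] at hgap
  linarith [logistic_le_one (N * γ), exp_neg_le_half_of_log_two_div_le hε.1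
    (log_two_div_le_annealing_growth hγ hδ hε hN hT)]
end
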